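/- (Sub-optimality gap of the conservative policy.) Let M* be the true MDP and M̃ = (S,A,P̂,r̃,d₀,γ) the conservative MDP with r̃(s,a) = r(s,a) − (2γ·R_max/(1−γ))·Ĉ(s,a), where TV(P̂(·|s,a),P*(·|s,a)) ≤ Ĉ(s,a) + ε for all (s,a) and Ĉ takes values in [0,1]. Let π̂ ∈ argmax_π V^π_{M̃}. Then for every policy π (in particular the optimal policy π*): V^{π̂}_{M*} ≥ V^π_{M*} − (4γ·R_max/(1−γ)²)·E_{(s,a)∼d^π_{P̂}}[Ĉ(s,a)] − (4γ·R_max/(1−γ)²)·ε. -/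

import Mathlib

open Finset

section MDPDefs

variable {S A : Type*} [Fintype S] [Fintype A] [DecidableEq S]

/-- A function is a probability mass function on a finite type. -/
def IsPMF {X : Type*} [Fintype X] (p : X → ℝ) : Prop :=
  (∀ x, 0 ≤ p x) ∧ ∑ x, p x = 1

/-- Total variation distance between two distributions on a finite type,
given by the half `ℓ¹` formula. -/
noncomputable def tv {X : Type*} [Fintype X] (p q : X → ℝ) : ℝ :=
  (1 / 2) * ∑ x, |p x - q x|

/-- One-step pushforward of a state-action distribution under policy `π` and
transition kernel `P`. -/
noncomputable def stepSA (π : S → A → ℝ) (P : S → A → S → ℝ)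
    (μ : S × A → ℝ) : S × A → ℝ :=
  fun sa => ∑ s : S, ∑ a : A, μ (s, a) * P s a sa.1 * π sa.1 sa.2

/-- Distribution over state-action pairs at time `t`, starting from initial
state distribution `μ₀`, following policy `π` in kernel `P`. -/
noncomputable def occ (π : S → A → ℝ) (P : S → A → S → ℝ) (μ₀ : S → ℝ) :
    ℕ → S × A → ℝ
  | 0 => fun sa => μ₀ sa.1 * π sa.1 sa.2
  | (t + 1) => stepSA π P (occ π P μ₀ t)

/-- Value function `V^π_{P,r}(s) = E_{π,P}[∑_t γ^t r(s_t,a_t) | s₀ = s]`. -/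
noncomputable def valueFn (π : S → A → ℝ) (P : S → A → S → ℝ) (r : S → A → ℝ)
    (γ : ℝ) (s : S) : ℝ :=
  ∑' t : ℕ, γ ^ t *
    ∑ sa : S × A, occ π P (fun s' => if s' = s then (1 : ℝ) else 0) t sa * r sa.1 sa.2

/-- Expected return `V^π_M = E_{s ∼ d₀}[V^π_{P,r}(s)]`. -/
noncomputable def expReturn (π : S → A → ℝ) (P : S → A → S → ℝ) (r : S → A → ℝ)
    (γ : ℝ) (d₀ : S → ℝ) : ℝ :=
  ∑ s : S, d₀ s * valueFn π P r γ s

/-- Normalized discounted state-action visitation distribution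
`d^π_P(s,a) = (1-γ) ∑_t γ^t Pr[s_t = s, a_t = a]`. -/
noncomputable def visit (π : S → A → ℝ) (P : S → A → S → ℝ) (d₀ : S → ℝ)
    (γ : ℝ) : S × A → ℝ :=
  fun sa => (1 - γ) * ∑' t : ℕ, γ ^ t * occ π P d₀ t sa

end MDPDefs

section Helpers

open Finset

set_option linter.unusedSectionVars false

variable {S A : Type*} [Fintype S] [Fintype A] [DecidableEq S]

/-- One-step pushforward of a state distribution. -/
noncomputable def Tk (π : S → A → ℝ) (P : S → A → S → ℝ) (μ : S → ℝ) : S → ℝ :=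
  fun s' => ∑ s : S, ∑ a : A, μ s * π s a * P s a s'

/-- Expectation of `f` under `μ ⊗ π`. -/
noncomputable def rho (π : S → A → ℝ) (f : S → A → ℝ) (μ : S → ℝ) : ℝ :=
  ∑ s : S, ∑ a : A, μ s * π s a * f s a

lemma occ_eq_iter (π : S → A → ℝ) (P : S → A → S → ℝ) (μ₀ : S → ℝ) :
    ∀ (t : ℕ) (sa : S × A),
      occ π P μ₀ t sa = (Tk π P)^[t] μ₀ sa.1 * π sa.1 sa.2 := by
  intro t
  induction t with
  | zero => intro sa; rfl
  | succ t ih =>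
    intro sa
    show stepSA π P (occ π P μ₀ t) sa = _
    rw [Function.iterate_succ_apply']
    simp only [stepSA, Tk, Finset.sum_mul]
    refine Finset.sum_congr rfl fun s _ => Finset.sum_congr rfl fun a _ => ?_
    rw [ih (s, a)]

lemma occSum (π : S → A → ℝ) (P : S → A → S → ℝ) (μ₀ : S → ℝ) (f : S → A → ℝ) (t : ℕ) :
    ∑ sa : S × A, occ π P μ₀ t sa * f sa.1 sa.2 = rho π f ((Tk π P)^[t] μ₀) := by
  rw [Fintype.sum_prod_type, rho]
  exact Finset.sum_congr rfl fun s _ => Finset.sum_congr rfl fun a _ => by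
    rw [occ_eq_iter]

lemma rho_abs_le (π : S → A → ℝ) (f : S → A → ℝ) (μ : S → ℝ) (B : ℝ)
    (hπ : ∀ s, IsPMF (π s)) (hf : ∀ s a, |f s a| ≤ B) :
    |rho π f μ| ≤ (∑ s : S, |μ s|) * B := by
  calc |rho π f μ| ≤ ∑ s : S, |∑ a : A, μ s * π s a * f s a| :=
        Finset.abs_sum_le_sum_abs _ _
    _ ≤ ∑ s : S, (|μ s| * B) := by
        refine Finset.sum_le_sum fun s _ => ?_
        calc |∑ a : A, μ s * π s a * f s a| ≤ ∑ a : A, |μ s * π s a * f s a| :=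
              Finset.abs_sum_le_sum_abs _ _
          _ ≤ ∑ a : A, |μ s| * π s a * B := by
              refine Finset.sum_le_sum fun a _ => ?_
              rw [abs_mul, abs_mul, abs_of_nonneg ((hπ s).1 a)]
              have h0 : (0:ℝ) ≤ |μ s| * π s a := mul_nonneg (abs_nonneg _) ((hπ s).1 a)
              exact mul_le_mul_of_nonneg_left (hf s a) h0
          _ = |μ s| * B := by
              rw [← Finset.sum_mul]
              rw [show ∑ a : A, |μ s| * π s a = |μ s| * ∑ a : A, π s a from
                Finset.mul_sum _ _ _ |>.symm, (hπ _).2, mul_one]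
    _ = (∑ s : S, |μ s|) * B := (Finset.sum_mul _ _ _).symm

lemma Tk_norm1 (π : S → A → ℝ) (P : S → A → S → ℝ) (μ : S → ℝ)
    (hπ : ∀ s, IsPMF (π s)) (hP : ∀ s a, IsPMF (P s a)) :
    ∑ s' : S, |Tk π P μ s'| ≤ ∑ s : S, |μ s| := by
  have step : ∀ s', |Tk π P μ s'| ≤ ∑ s : S, ∑ a : A, |μ s| * π s a * P s a s' := by
    intro s'
    calc |Tk π P μ s'| ≤ ∑ s : S, |∑ a : A, μ s * π s a * P s a s'| :=
          Finset.abs_sum_le_sum_abs _ _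
      _ ≤ ∑ s : S, ∑ a : A, |μ s| * π s a * P s a s' := by
          refine Finset.sum_le_sum fun s _ => le_trans (Finset.abs_sum_le_sum_abs _ _) ?_
          refine Finset.sum_le_sum fun a _ => le_of_eq ?_
          rw [abs_mul, abs_mul, abs_of_nonneg ((hπ s).1 a),
            abs_of_nonneg ((hP s a).1 s')]
  calc ∑ s' : S, |Tk π P μ s'| ≤
        ∑ s' : S, ∑ s : S, ∑ a : A, |μ s| * π s a * P s a s' :=
        Finset.sum_le_sum fun s' _ => step s'
    _ = ∑ s : S, ∑ a : A, |μ s| * π s a * ∑ s' : S, P s a s' := by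
        rw [Finset.sum_comm]
        refine Finset.sum_congr rfl fun s _ => ?_
        rw [Finset.sum_comm]
        exact Finset.sum_congr rfl fun a _ => (Finset.mul_sum _ _ _).symm
    _ = ∑ s : S, |μ s| := by
        refine Finset.sum_congr rfl fun s _ => ?_
        have h1 : ∀ a : A, |μ s| * π s a * ∑ s' : S, P s a s' = |μ s| * π s a := by
          intro a; rw [(hP s a).2, mul_one]
        simp only [h1]
        rw [← Finset.mul_sum, (hπ s).2, mul_one]

lemma Tk_iter_norm1 (π : S → A → ℝ) (P : S → A → S → ℝ) (μ : S → ℝ) (t : ℕ)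
    (hπ : ∀ s, IsPMF (π s)) (hP : ∀ s a, IsPMF (P s a)) :
    ∑ s : S, |(Tk π P)^[t] μ s| ≤ ∑ s : S, |μ s| := by
  induction t with
  | zero => simp
  | succ t ih =>
    rw [Function.iterate_succ_apply']
    exact le_trans (Tk_norm1 π P _ hπ hP) ih


noncomputable def Vv (π : S → A → ℝ) (P : S → A → S → ℝ) (f : S → A → ℝ)
    (γ : ℝ) (μ : S → ℝ) : ℝ :=
  ∑' t : ℕ, γ ^ t * rho π f ((Tk π P)^[t] μ)

lemma rho_iter_abs_le (π : S → A → ℝ) (P : S → A → S → ℝ) (f : S → A → ℝ)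
    (μ : S → ℝ) (B : ℝ) (t : ℕ)
    (hπ : ∀ s, IsPMF (π s)) (hP : ∀ s a, IsPMF (P s a))
    (hf : ∀ s a, |f s a| ≤ B) (hB : 0 ≤ B) :
    |rho π f ((Tk π P)^[t] μ)| ≤ (∑ s : S, |μ s|) * B :=
  le_trans (rho_abs_le π f _ B hπ hf)
    (mul_le_mul_of_nonneg_right (Tk_iter_norm1 π P μ t hπ hP) hB)

lemma summable_V (π : S → A → ℝ) (P : S → A → S → ℝ) (f : S → A → ℝ)
    (γ : ℝ) (μ : S → ℝ) (B : ℝ)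
    (hγ0 : 0 ≤ γ) (hγ1 : γ < 1)
    (hπ : ∀ s, IsPMF (π s)) (hP : ∀ s a, IsPMF (P s a))
    (hf : ∀ s a, |f s a| ≤ B) (hB : 0 ≤ B) :
    Summable (fun t : ℕ => γ ^ t * rho π f ((Tk π P)^[t] μ)) := by
  refine Summable.of_abs ?_
  refine Summable.of_nonneg_of_le (fun t => abs_nonneg _) (fun t => ?_)
    (((summable_geometric_of_lt_one hγ0 hγ1)).mul_right ((∑ s : S, |μ s|) * B))
  rw [abs_mul, abs_pow, abs_of_nonneg hγ0]
  exact mul_le_mul_of_nonneg_left (rho_iter_abs_le π P f μ B t hπ hP hf hB)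
    (pow_nonneg hγ0 t)

lemma Vv_abs_le (π : S → A → ℝ) (P : S → A → S → ℝ) (f : S → A → ℝ)
    (γ : ℝ) (μ : S → ℝ) (B : ℝ)
    (hγ0 : 0 ≤ γ) (hγ1 : γ < 1)
    (hπ : ∀ s, IsPMF (π s)) (hP : ∀ s a, IsPMF (P s a))
    (hf : ∀ s a, |f s a| ≤ B) (hB : 0 ≤ B) :
    |Vv π P f γ μ| ≤ (∑ s : S, |μ s|) * B / (1 - γ) := by
  have hsum : Summable (fun t : ℕ => γ ^ t * ((∑ s : S, |μ s|) * B)) :=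
    (summable_geometric_of_lt_one hγ0 hγ1).mul_right _
  have habs : Summable (fun t : ℕ => |γ ^ t * rho π f ((Tk π P)^[t] μ)|) := by
    refine Summable.of_nonneg_of_le (fun t => abs_nonneg _) (fun t => ?_) hsum
    rw [abs_mul, abs_pow, abs_of_nonneg hγ0]
    exact mul_le_mul_of_nonneg_left (rho_iter_abs_le π P f μ B t hπ hP hf hB)
      (pow_nonneg hγ0 t)
  calc |Vv π P f γ μ| ≤ ∑' t : ℕ, |γ ^ t * rho π f ((Tk π P)^[t] μ)| := by
        rw [Vv]
        have h := norm_tsum_le_tsum_norm (f := fun t : ℕ => γ ^ t * rho π f ((Tk π P)^[t] μ)) habs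
        simp only [Real.norm_eq_abs] at h
        exact h
    _ ≤ ∑' t : ℕ, γ ^ t * ((∑ s : S, |μ s|) * B) := by
        refine Summable.tsum_le_tsum (fun t => ?_) habs hsum
        rw [abs_mul, abs_pow, abs_of_nonneg hγ0]
        exact mul_le_mul_of_nonneg_left (rho_iter_abs_le π P f μ B t hπ hP hf hB)
          (pow_nonneg hγ0 t)
    _ = (∑ s : S, |μ s|) * B / (1 - γ) := by
        rw [tsum_mul_right, tsum_geometric_of_lt_one hγ0 hγ1, div_eq_mul_inv]
        ring

lemma Vv_bellman (π : S → A → ℝ) (P : S → A → S → ℝ) (f : S → A → ℝ)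
    (γ : ℝ) (μ : S → ℝ) (B : ℝ)
    (hγ0 : 0 ≤ γ) (hγ1 : γ < 1)
    (hπ : ∀ s, IsPMF (π s)) (hP : ∀ s a, IsPMF (P s a))
    (hf : ∀ s a, |f s a| ≤ B) (hB : 0 ≤ B) :
    Vv π P f γ μ = rho π f μ + γ * Vv π P f γ (Tk π P μ) := by
  have hsum := summable_V π P f γ μ B hγ0 hγ1 hπ hP hf hB
  rw [Vv, Summable.tsum_eq_zero_add hsum]
  simp only [pow_zero, one_mul, Function.iterate_zero, id]
  congr 1
  rw [Vv, ← tsum_mul_left]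
  refine tsum_congr fun t => ?_
  rw [Function.iterate_succ_apply, pow_succ]
  ring

lemma Tk_comb (π : S → A → ℝ) (P : S → A → S → ℝ) (d : S → ℝ) (e : S → S → ℝ) :
    Tk π P (fun x => ∑ s : S, d s * e s x) = fun x => ∑ s : S, d s * Tk π P (e s) x := by
  funext x
  calc Tk π P (fun y => ∑ s : S, d s * e s y) x
      = ∑ s1 : S, ∑ a : A, ∑ s : S, d s * e s s1 * π s1 a * P s1 a x := by
        unfold Tk
        refine Finset.sum_congr rfl fun s1 _ => Finset.sum_congr rfl fun a _ => ?_
        rw [Finset.sum_mul, Finset.sum_mul]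
    _ = ∑ s1 : S, ∑ s : S, ∑ a : A, d s * e s s1 * π s1 a * P s1 a x :=
        Finset.sum_congr rfl fun s1 _ => Finset.sum_comm
    _ = ∑ s : S, ∑ s1 : S, ∑ a : A, d s * e s s1 * π s1 a * P s1 a x :=
        Finset.sum_comm
    _ = ∑ s : S, d s * Tk π P (e s) x := by
        refine Finset.sum_congr rfl fun s _ => ?_
        unfold Tk
        rw [Finset.mul_sum]
        refine Finset.sum_congr rfl fun s1 _ => ?_
        rw [Finset.mul_sum]
        refine Finset.sum_congr rfl fun a _ => by ring

lemma Tk_iter_comb (π : S → A → ℝ) (P : S → A → S → ℝ) (d : S → ℝ) (e : S → S → ℝ)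
    (t : ℕ) :
    (Tk π P)^[t] (fun x => ∑ s : S, d s * e s x) =
      fun x => ∑ s : S, d s * (Tk π P)^[t] (e s) x := by
  induction t generalizing e with
  | zero => simp
  | succ t ih =>
    rw [Function.iterate_succ_apply, Tk_comb, ih (fun s => Tk π P (e s))]
    funext x
    refine Finset.sum_congr rfl fun s _ => ?_
    rw [← Function.iterate_succ_apply]

lemma rho_comb (π : S → A → ℝ) (f : S → A → ℝ) (d : S → ℝ) (e : S → S → ℝ) :
    rho π f (fun x => ∑ s : S, d s * e s x) = ∑ s : S, d s * rho π f (e s) := by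
  calc rho π f (fun y => ∑ s : S, d s * e s y)
      = ∑ s1 : S, ∑ a : A, ∑ s : S, d s * e s s1 * π s1 a * f s1 a := by
        unfold rho
        refine Finset.sum_congr rfl fun s1 _ => Finset.sum_congr rfl fun a _ => ?_
        rw [Finset.sum_mul, Finset.sum_mul]
    _ = ∑ s1 : S, ∑ s : S, ∑ a : A, d s * e s s1 * π s1 a * f s1 a :=
        Finset.sum_congr rfl fun s1 _ => Finset.sum_comm
    _ = ∑ s : S, ∑ s1 : S, ∑ a : A, d s * e s s1 * π s1 a * f s1 a :=
        Finset.sum_comm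
    _ = ∑ s : S, d s * rho π f (e s) := by
        refine Finset.sum_congr rfl fun s _ => ?_
        unfold rho
        rw [Finset.mul_sum]
        refine Finset.sum_congr rfl fun s1 _ => ?_
        rw [Finset.mul_sum]
        refine Finset.sum_congr rfl fun a _ => by ring

lemma valueFn_eq (π : S → A → ℝ) (P : S → A → S → ℝ) (f : S → A → ℝ)
    (γ : ℝ) (s : S) :
    valueFn π P f γ s = Vv π P f γ (fun x => if x = s then 1 else 0) := by
  unfold valueFn Vv
  exact tsum_congr fun t => by rw [occSum]

lemma dirac_comb (d : S → ℝ) :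
    (fun x => ∑ s : S, d s * (if x = s then (1:ℝ) else 0)) = d := by
  funext x
  simp [Finset.sum_ite_eq]

lemma expReturn_eq (π : S → A → ℝ) (P : S → A → S → ℝ) (f : S → A → ℝ)
    (γ : ℝ) (d₀ : S → ℝ) (B : ℝ)
    (hγ0 : 0 ≤ γ) (hγ1 : γ < 1)
    (hπ : ∀ s, IsPMF (π s)) (hP : ∀ s a, IsPMF (P s a))
    (hf : ∀ s a, |f s a| ≤ B) (hB : 0 ≤ B) :
    expReturn π P f γ d₀ = Vv π P f γ d₀ := by
  simp only [expReturn]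
  have h1 : ∀ s : S, valueFn π P f γ s = Vv π P f γ (fun x => if x = s then 1 else 0) :=
    valueFn_eq π P f γ
  simp only [h1]
  have hsum : ∀ s : S, Summable (fun t : ℕ =>
      d₀ s * (γ ^ t * rho π f ((Tk π P)^[t] (fun x => if x = s then (1:ℝ) else 0)))) :=
    fun s => (summable_V π P f γ _ B hγ0 hγ1 hπ hP hf hB).mul_left _
  calc ∑ s : S, d₀ s * Vv π P f γ (fun x => if x = s then 1 else 0)
      = ∑ s : S, ∑' t : ℕ,
          d₀ s * (γ ^ t * rho π f ((Tk π P)^[t] (fun x => if x = s then (1:ℝ) else 0))) := by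
        refine Finset.sum_congr rfl fun s _ => ?_
        rw [Vv, ← tsum_mul_left]
    _ = ∑' t : ℕ, ∑ s : S,
          d₀ s * (γ ^ t * rho π f ((Tk π P)^[t] (fun x => if x = s then (1:ℝ) else 0))) :=
        (Summable.tsum_finsetSum (fun s _ => hsum s)).symm
    _ = Vv π P f γ d₀ := by
        rw [Vv]
        refine tsum_congr fun t => ?_
        have : ∑ s : S, d₀ s * (γ ^ t * rho π f ((Tk π P)^[t] (fun x => if x = s then (1:ℝ) else 0)))
            = γ ^ t * ∑ s : S, d₀ s * rho π f ((Tk π P)^[t] (fun x => if x = s then (1:ℝ) else 0)) := by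
          rw [Finset.mul_sum]
          exact Finset.sum_congr rfl fun s _ => by ring
        rw [this, ← rho_comb, ← Tk_iter_comb, dirac_comb]

lemma Tk_sub (π : S → A → ℝ) (P : S → A → S → ℝ) (μ ν : S → ℝ) :
    Tk π P (fun x => μ x - ν x) = fun x => Tk π P μ x - Tk π P ν x := by
  funext x
  simp only [Tk, sub_mul, Finset.sum_sub_distrib]

lemma Tk_iter_sub (π : S → A → ℝ) (P : S → A → S → ℝ) (μ ν : S → ℝ) (t : ℕ) :
    (Tk π P)^[t] (fun x => μ x - ν x) =
      fun x => (Tk π P)^[t] μ x - (Tk π P)^[t] ν x := by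
  induction t generalizing μ ν with
  | zero => simp
  | succ t ih =>
    rw [Function.iterate_succ_apply, Tk_sub, ih]
    simp only [← Function.iterate_succ_apply]

lemma rho_sub_mu (π : S → A → ℝ) (f : S → A → ℝ) (μ ν : S → ℝ) :
    rho π f (fun x => μ x - ν x) = rho π f μ - rho π f ν := by
  simp only [rho, sub_mul, Finset.sum_sub_distrib]

lemma Vv_sub_mu (π : S → A → ℝ) (P : S → A → S → ℝ) (f : S → A → ℝ)
    (γ : ℝ) (μ ν : S → ℝ) (B : ℝ)
    (hγ0 : 0 ≤ γ) (hγ1 : γ < 1)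
    (hπ : ∀ s, IsPMF (π s)) (hP : ∀ s a, IsPMF (P s a))
    (hf : ∀ s a, |f s a| ≤ B) (hB : 0 ≤ B) :
    Vv π P f γ μ - Vv π P f γ ν = Vv π P f γ (fun x => μ x - ν x) := by
  rw [Vv, Vv, Vv,
    ← Summable.tsum_sub (summable_V π P f γ μ B hγ0 hγ1 hπ hP hf hB)
      (summable_V π P f γ ν B hγ0 hγ1 hπ hP hf hB)]
  refine tsum_congr fun t => ?_
  rw [Tk_iter_sub, rho_sub_mu]
  ring

lemma tv_nonneg {X : Type*} [Fintype X] (p q : X → ℝ) : 0 ≤ tv p q :=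
  mul_nonneg (by norm_num) (Finset.sum_nonneg fun x _ => abs_nonneg _)

lemma tv_le_one {X : Type*} [Fintype X] (p q : X → ℝ)
    (hp : IsPMF p) (hq : IsPMF q) : tv p q ≤ 1 := by
  have h : ∑ x : X, |p x - q x| ≤ 2 := by
    calc ∑ x : X, |p x - q x| ≤ ∑ x : X, (|p x| + |q x|) :=
          Finset.sum_le_sum fun x _ => abs_sub _ _
      _ = 2 := by
        rw [Finset.sum_add_distrib]
        have hp1 : ∑ x : X, |p x| = 1 := by
          rw [Finset.sum_congr rfl fun x _ => abs_of_nonneg (hp.1 x), hp.2]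
        have hq1 : ∑ x : X, |q x| = 1 := by
          rw [Finset.sum_congr rfl fun x _ => abs_of_nonneg (hq.1 x), hq.2]
        rw [hp1, hq1]; norm_num
  rw [tv]; linarith

lemma norm1_pmf (μ : S → ℝ) (hμ : IsPMF μ) : ∑ s : S, |μ s| = 1 := by
  rw [Finset.sum_congr rfl fun s _ => abs_of_nonneg (hμ.1 s), hμ.2]

lemma Tk_pmf (π : S → A → ℝ) (P : S → A → S → ℝ) (μ : S → ℝ)
    (hπ : ∀ s, IsPMF (π s)) (hP : ∀ s a, IsPMF (P s a)) (hμ : IsPMF μ) :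
    IsPMF (Tk π P μ) := by
  constructor
  · intro s'
    exact Finset.sum_nonneg fun s _ => Finset.sum_nonneg fun a _ =>
      mul_nonneg (mul_nonneg (hμ.1 s) ((hπ s).1 a)) ((hP s a).1 s')
  · calc ∑ s' : S, Tk π P μ s'
        = ∑ s : S, ∑ s' : S, ∑ a : A, μ s * π s a * P s a s' :=
          Finset.sum_comm
      _ = ∑ s : S, ∑ a : A, ∑ s' : S, μ s * π s a * P s a s' :=
          Finset.sum_congr rfl fun s _ => Finset.sum_comm
      _ = 1 := by
          have h1 : ∀ s : S, ∀ a : A, ∑ s' : S, μ s * π s a * P s a s'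
              = μ s * π s a := by
            intro s a
            rw [← Finset.mul_sum, (hP s a).2, mul_one]
          simp only [h1]
          have h2 : ∀ s : S, ∑ a : A, μ s * π s a = μ s := by
            intro s; rw [← Finset.mul_sum, (hπ s).2, mul_one]
          simp only [h2, hμ.2]

lemma Tk_iter_pmf (π : S → A → ℝ) (P : S → A → S → ℝ) (μ : S → ℝ) (t : ℕ)
    (hπ : ∀ s, IsPMF (π s)) (hP : ∀ s a, IsPMF (P s a)) (hμ : IsPMF μ) :
    IsPMF ((Tk π P)^[t] μ) := by
  induction t with
  | zero => simpa using hμ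
  | succ t ih =>
    rw [Function.iterate_succ_apply']
    exact Tk_pmf π P _ hπ hP ih

lemma rho_nonneg (π : S → A → ℝ) (f : S → A → ℝ) (ν : S → ℝ)
    (hν : ∀ s, 0 ≤ ν s) (hπ : ∀ s, IsPMF (π s)) (hf : ∀ s a, 0 ≤ f s a) :
    0 ≤ rho π f ν :=
  Finset.sum_nonneg fun s _ => Finset.sum_nonneg fun a _ =>
    mul_nonneg (mul_nonneg (hν s) ((hπ s).1 a)) (hf s a)

lemma rho_mono_f (π : S → A → ℝ) (f g : S → A → ℝ) (ν : S → ℝ)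
    (hν : ∀ s, 0 ≤ ν s) (hπ : ∀ s, IsPMF (π s)) (hfg : ∀ s a, f s a ≤ g s a) :
    rho π f ν ≤ rho π g ν :=
  Finset.sum_le_sum fun s _ => Finset.sum_le_sum fun a _ =>
    mul_le_mul_of_nonneg_left (hfg s a) (mul_nonneg (hν s) ((hπ s).1 a))

lemma Tk_diff_bound (π : S → A → ℝ) (P Q : S → A → S → ℝ) (μ : S → ℝ)
    (hμ : ∀ s, 0 ≤ μ s) (hπ : ∀ s, IsPMF (π s)) :
    ∑ x : S, |Tk π P μ x - Tk π Q μ x| ≤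
      2 * rho π (fun s a => tv (P s a) (Q s a)) μ := by
  have key : ∀ x : S, |Tk π P μ x - Tk π Q μ x| ≤
      ∑ s : S, ∑ a : A, μ s * π s a * |P s a x - Q s a x| := by
    intro x
    have h1 : Tk π P μ x - Tk π Q μ x =
        ∑ s : S, ∑ a : A, μ s * π s a * (P s a x - Q s a x) := by
      simp only [Tk, mul_sub, Finset.sum_sub_distrib]
    rw [h1]
    refine le_trans (Finset.abs_sum_le_sum_abs _ _) ?_
    refine Finset.sum_le_sum fun s _ => le_trans (Finset.abs_sum_le_sum_abs _ _) ?_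
    refine Finset.sum_le_sum fun a _ => le_of_eq ?_
    rw [abs_mul, abs_of_nonneg (mul_nonneg (hμ s) ((hπ s).1 a))]
  calc ∑ x : S, |Tk π P μ x - Tk π Q μ x|
      ≤ ∑ x : S, ∑ s : S, ∑ a : A, μ s * π s a * |P s a x - Q s a x| :=
        Finset.sum_le_sum fun x _ => key x
    _ = ∑ s : S, ∑ x : S, ∑ a : A, μ s * π s a * |P s a x - Q s a x| :=
        Finset.sum_comm
    _ = ∑ s : S, ∑ a : A, ∑ x : S, μ s * π s a * |P s a x - Q s a x| :=
        Finset.sum_congr rfl fun s _ => Finset.sum_comm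
    _ = 2 * rho π (fun s a => tv (P s a) (Q s a)) μ := by
        rw [rho, Finset.mul_sum]
        refine Finset.sum_congr rfl fun s _ => ?_
        rw [Finset.mul_sum]
        refine Finset.sum_congr rfl fun a _ => ?_
        rw [← Finset.mul_sum, tv]
        ring

lemma sim_aux (π : S → A → ℝ) (P Q : S → A → S → ℝ) (f : S → A → ℝ)
    (γ B : ℝ) (hγ0 : 0 ≤ γ) (hγ1 : γ < 1)
    (hπ : ∀ s, IsPMF (π s)) (hP : ∀ s a, IsPMF (P s a)) (hQ : ∀ s a, IsPMF (Q s a))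
    (hf : ∀ s a, |f s a| ≤ B) (hB : 0 ≤ B) :
    ∀ (n : ℕ) (μ : S → ℝ), IsPMF μ →
      |Vv π P f γ μ - Vv π Q f γ μ| ≤
        (∑ t ∈ Finset.range n, γ ^ (t + 1) *
          (2 * (B / (1 - γ)) * rho π (fun s a => tv (P s a) (Q s a)) ((Tk π Q)^[t] μ)))
        + γ ^ n * (2 * (B / (1 - γ))) := by
  intro n
  induction n with
  | zero =>
    intro μ hμ
    simp only [Finset.range_zero, Finset.sum_empty, pow_zero, one_mul, zero_add]
    have h1 := Vv_abs_le π P f γ μ B hγ0 hγ1 hπ hP hf hB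
    have h2 := Vv_abs_le π Q f γ μ B hγ0 hγ1 hπ hQ hf hB
    rw [norm1_pmf μ hμ, one_mul] at h1 h2
    calc |Vv π P f γ μ - Vv π Q f γ μ| ≤ |Vv π P f γ μ| + |Vv π Q f γ μ| :=
          abs_sub _ _
      _ ≤ 2 * (B / (1 - γ)) := by rw [div_eq_mul_inv] at h1 h2 ⊢; linarith
  | succ n ih =>
    intro μ hμ
    have hTQμ : IsPMF (Tk π Q μ) := Tk_pmf π Q μ hπ hQ hμ
    have bellP := Vv_bellman π P f γ μ B hγ0 hγ1 hπ hP hf hB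
    have bellQ := Vv_bellman π Q f γ μ B hγ0 hγ1 hπ hQ hf hB
    have hdiff : Vv π P f γ μ - Vv π Q f γ μ =
        γ * (Vv π P f γ (Tk π P μ) - Vv π P f γ (Tk π Q μ))
        + γ * (Vv π P f γ (Tk π Q μ) - Vv π Q f γ (Tk π Q μ)) := by
      rw [bellP, bellQ]; ring
    have hE : |Vv π P f γ (Tk π P μ) - Vv π P f γ (Tk π Q μ)| ≤
        2 * (B / (1 - γ)) * rho π (fun s a => tv (P s a) (Q s a)) μ := by
      rw [Vv_sub_mu π P f γ _ _ B hγ0 hγ1 hπ hP hf hB]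
      refine le_trans (Vv_abs_le π P f γ _ B hγ0 hγ1 hπ hP hf hB) ?_
      have hd := Tk_diff_bound π P Q μ hμ.1 hπ
      have h1γ : (0:ℝ) < 1 - γ := by linarith
      have hBd : 0 ≤ B / (1 - γ) := div_nonneg hB h1γ.le
      calc (∑ s : S, |Tk π P μ s - Tk π Q μ s|) * B / (1 - γ)
          = (∑ s : S, |Tk π P μ s - Tk π Q μ s|) * (B / (1 - γ)) := by ring
        _ ≤ (2 * rho π (fun s a => tv (P s a) (Q s a)) μ) * (B / (1 - γ)) :=
            mul_le_mul_of_nonneg_right hd hBd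
        _ = 2 * (B / (1 - γ)) * rho π (fun s a => tv (P s a) (Q s a)) μ := by ring
    have hD := ih (Tk π Q μ) hTQμ
    have habs : |Vv π P f γ μ - Vv π Q f γ μ| ≤
        γ * (2 * (B / (1 - γ)) * rho π (fun s a => tv (P s a) (Q s a)) μ)
        + γ * ((∑ t ∈ Finset.range n, γ ^ (t + 1) *
            (2 * (B / (1 - γ)) * rho π (fun s a => tv (P s a) (Q s a)) ((Tk π Q)^[t] (Tk π Q μ))))
          + γ ^ n * (2 * (B / (1 - γ)))) := by
      rw [hdiff]
      refine le_trans (abs_add_le _ _) ?_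
      rw [abs_mul, abs_mul, abs_of_nonneg hγ0]
      exact add_le_add (mul_le_mul_of_nonneg_left hE hγ0)
        (mul_le_mul_of_nonneg_left hD hγ0)
    refine le_trans habs (le_of_eq ?_)
    rw [Finset.sum_range_succ']
    simp only [pow_zero, Function.iterate_zero, id, pow_one]
    rw [mul_add, Finset.mul_sum]
    have hterm : ∀ t : ℕ, γ * (γ ^ (t + 1) *
        (2 * (B / (1 - γ)) * rho π (fun s a => tv (P s a) (Q s a)) ((Tk π Q)^[t] (Tk π Q μ))))
        = γ ^ (t + 1 + 1) *
          (2 * (B / (1 - γ)) * rho π (fun s a => tv (P s a) (Q s a)) ((Tk π Q)^[t + 1] μ)) := by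
      intro t
      rw [Function.iterate_succ_apply, pow_succ]
      ring
    simp only [hterm]
    ring

lemma pmf_le_one {X : Type*} [Fintype X] (p : X → ℝ) (hp : IsPMF p) (x : X) :
    p x ≤ 1 := by
  have h := Finset.single_le_sum (f := p) (fun i _ => hp.1 i) (Finset.mem_univ x)
  rw [hp.2] at h
  exact h

lemma sim (π : S → A → ℝ) (P Q : S → A → S → ℝ) (f : S → A → ℝ)
    (γ B : ℝ) (μ : S → ℝ) (hγ0 : 0 ≤ γ) (hγ1 : γ < 1)
    (hπ : ∀ s, IsPMF (π s)) (hP : ∀ s a, IsPMF (P s a)) (hQ : ∀ s a, IsPMF (Q s a))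
    (hf : ∀ s a, |f s a| ≤ B) (hB : 0 ≤ B) (hμ : IsPMF μ) :
    |Vv π P f γ μ - Vv π Q f γ μ| ≤
      γ * (2 * (B / (1 - γ))) * Vv π Q (fun s a => tv (P s a) (Q s a)) γ μ := by
  set TVf := fun s a => tv (P s a) (Q s a) with hTVf
  have htv1 : ∀ s a, |TVf s a| ≤ 1 := fun s a => by
    rw [abs_of_nonneg (tv_nonneg _ _)]
    exact tv_le_one _ _ (hP s a) (hQ s a)
  have hsumW : Summable (fun t : ℕ => γ ^ t * rho π TVf ((Tk π Q)^[t] μ)) :=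
    summable_V π Q TVf γ μ 1 hγ0 hγ1 hπ hQ htv1 zero_le_one
  have hnonneg : ∀ t : ℕ, 0 ≤ γ ^ t * rho π TVf ((Tk π Q)^[t] μ) := fun t =>
    mul_nonneg (pow_nonneg hγ0 t)
      (rho_nonneg π TVf _ (Tk_iter_pmf π Q μ t hπ hQ hμ).1 hπ (fun s a => tv_nonneg _ _))
  have hW : ∀ n : ℕ, ∑ t ∈ Finset.range n, γ ^ t * rho π TVf ((Tk π Q)^[t] μ)
      ≤ Vv π Q TVf γ μ := fun n =>
    Summable.sum_le_tsum _ (fun t _ => hnonneg t) hsumW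
  have key : ∀ n : ℕ, |Vv π P f γ μ - Vv π Q f γ μ| ≤
      γ * (2 * (B / (1 - γ))) * Vv π Q TVf γ μ + γ ^ n * (2 * (B / (1 - γ))) := by
    intro n
    refine le_trans (sim_aux π P Q f γ B hγ0 hγ1 hπ hP hQ hf hB n μ hμ) ?_
    have heq : ∑ t ∈ Finset.range n,
        γ ^ (t + 1) * (2 * (B / (1 - γ)) * rho π TVf ((Tk π Q)^[t] μ))
        = γ * (2 * (B / (1 - γ))) *
            ∑ t ∈ Finset.range n, γ ^ t * rho π TVf ((Tk π Q)^[t] μ) := by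
      rw [Finset.mul_sum]
      exact Finset.sum_congr rfl fun t _ => by rw [pow_succ]; ring
    rw [heq]
    have hc : 0 ≤ γ * (2 * (B / (1 - γ))) :=
      mul_nonneg hγ0 (mul_nonneg (by norm_num) (div_nonneg hB (by linarith)))
    exact add_le_add (mul_le_mul_of_nonneg_left (hW n) hc) le_rfl
  have hlim : Filter.Tendsto (fun n : ℕ =>
      γ * (2 * (B / (1 - γ))) * Vv π Q TVf γ μ + γ ^ n * (2 * (B / (1 - γ))))
      Filter.atTop
      (nhds (γ * (2 * (B / (1 - γ))) * Vv π Q TVf γ μ + 0 * (2 * (B / (1 - γ))))) :=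
    Filter.Tendsto.const_add _
      ((tendsto_pow_atTop_nhds_zero_of_lt_one hγ0 hγ1).mul_const _)
  rw [zero_mul, add_zero] at hlim
  exact ge_of_tendsto' hlim key

lemma occ_nonneg' (π : S → A → ℝ) (P : S → A → S → ℝ) (μ₀ : S → ℝ) (t : ℕ)
    (sa : S × A) (hπ : ∀ s, IsPMF (π s)) (hP : ∀ s a, IsPMF (P s a))
    (hμ₀ : IsPMF μ₀) : 0 ≤ occ π P μ₀ t sa := by
  rw [occ_eq_iter]
  exact mul_nonneg ((Tk_iter_pmf π P μ₀ t hπ hP hμ₀).1 _) ((hπ _).1 _)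

lemma occ_le_one' (π : S → A → ℝ) (P : S → A → S → ℝ) (μ₀ : S → ℝ) (t : ℕ)
    (sa : S × A) (hπ : ∀ s, IsPMF (π s)) (hP : ∀ s a, IsPMF (P s a))
    (hμ₀ : IsPMF μ₀) : occ π P μ₀ t sa ≤ 1 := by
  rw [occ_eq_iter]
  calc (Tk π P)^[t] μ₀ sa.1 * π sa.1 sa.2
      ≤ 1 * 1 := mul_le_mul (pmf_le_one _ (Tk_iter_pmf π P μ₀ t hπ hP hμ₀) _)
        (pmf_le_one _ (hπ _) _) ((hπ _).1 _)
        zero_le_one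
    _ = 1 := mul_one 1

lemma visit_eq (π : S → A → ℝ) (P : S → A → S → ℝ) (d₀ : S → ℝ) (γ : ℝ)
    (C : S → A → ℝ) (hγ0 : 0 ≤ γ) (hγ1 : γ < 1)
    (hπ : ∀ s, IsPMF (π s)) (hP : ∀ s a, IsPMF (P s a)) (hd₀ : IsPMF d₀)
    (hC : ∀ s a, |C s a| ≤ 1) :
    ∑ sa : S × A, visit π P d₀ γ sa * C sa.1 sa.2 = (1 - γ) * Vv π P C γ d₀ := by
  have hsum : ∀ sa : S × A,
      Summable (fun t : ℕ => γ ^ t * occ π P d₀ t sa * C sa.1 sa.2) := by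
    intro sa
    refine Summable.of_abs (Summable.of_nonneg_of_le (fun t => abs_nonneg _)
      (fun t => ?_) (summable_geometric_of_lt_one hγ0 hγ1))
    rw [abs_mul, abs_mul, abs_pow, abs_of_nonneg hγ0,
      abs_of_nonneg (occ_nonneg' π P d₀ t sa hπ hP hd₀)]
    calc γ ^ t * occ π P d₀ t sa * |C sa.1 sa.2|
        ≤ γ ^ t * 1 * 1 := by
          refine mul_le_mul (mul_le_mul_of_nonneg_left
            (occ_le_one' π P d₀ t sa hπ hP hd₀) (pow_nonneg hγ0 t)) (hC _ _)
            (abs_nonneg _) (by positivity)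
      _ = γ ^ t := by ring
  have h1 : ∀ sa : S × A, visit π P d₀ γ sa * C sa.1 sa.2
      = (1 - γ) * ∑' t : ℕ, γ ^ t * occ π P d₀ t sa * C sa.1 sa.2 := by
    intro sa
    rw [visit, mul_assoc, ← tsum_mul_right]
  simp only [h1]
  rw [← Finset.mul_sum]
  congr 1
  rw [← Summable.tsum_finsetSum (fun sa _ => hsum sa)]
  unfold Vv
  refine tsum_congr fun t => ?_
  rw [← occSum π P d₀ C t, Finset.mul_sum]
  refine Finset.sum_congr rfl fun sa _ => by ring

lemma rho_sub_f (π : S → A → ℝ) (f g : S → A → ℝ) (c : ℝ) (ν : S → ℝ) :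
    rho π (fun s a => f s a - c * g s a) ν = rho π f ν - c * rho π g ν := by
  have h : ∀ s a : _, ν s * π s a * (f s a - c * g s a)
      = ν s * π s a * f s a - c * (ν s * π s a * g s a) := fun s a => by ring
  simp only [rho, h, Finset.sum_sub_distrib, Finset.mul_sum]

lemma Vv_sub_f (π : S → A → ℝ) (P : S → A → S → ℝ) (f g : S → A → ℝ)
    (c γ : ℝ) (μ : S → ℝ) (Bf Bg : ℝ)
    (hγ0 : 0 ≤ γ) (hγ1 : γ < 1)
    (hπ : ∀ s, IsPMF (π s)) (hP : ∀ s a, IsPMF (P s a))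
    (hf : ∀ s a, |f s a| ≤ Bf) (hBf : 0 ≤ Bf)
    (hg : ∀ s a, |g s a| ≤ Bg) (hBg : 0 ≤ Bg) :
    Vv π P (fun s a => f s a - c * g s a) γ μ
      = Vv π P f γ μ - c * Vv π P g γ μ := by
  have hs1 := summable_V π P f γ μ Bf hγ0 hγ1 hπ hP hf hBf
  have hs2 := summable_V π P g γ μ Bg hγ0 hγ1 hπ hP hg hBg
  rw [Vv, Vv, Vv, ← tsum_mul_left, ← Summable.tsum_sub hs1 (hs2.mul_left c)]
  refine tsum_congr fun t => ?_
  rw [rho_sub_f]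
  ring

lemma Vv_mono_f (π : S → A → ℝ) (P : S → A → S → ℝ) (f g : S → A → ℝ)
    (γ : ℝ) (μ : S → ℝ) (Bf Bg : ℝ)
    (hγ0 : 0 ≤ γ) (hγ1 : γ < 1)
    (hπ : ∀ s, IsPMF (π s)) (hP : ∀ s a, IsPMF (P s a)) (hμ : IsPMF μ)
    (hf : ∀ s a, |f s a| ≤ Bf) (hBf : 0 ≤ Bf)
    (hg : ∀ s a, |g s a| ≤ Bg) (hBg : 0 ≤ Bg)
    (hfg : ∀ s a, f s a ≤ g s a) :
    Vv π P f γ μ ≤ Vv π P g γ μ := by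
  refine Summable.tsum_le_tsum (fun t => ?_)
    (summable_V π P f γ μ Bf hγ0 hγ1 hπ hP hf hBf)
    (summable_V π P g γ μ Bg hγ0 hγ1 hπ hP hg hBg)
  exact mul_le_mul_of_nonneg_left
    (rho_mono_f π f g _ (Tk_iter_pmf π P μ t hπ hP hμ).1 hπ hfg)
    (pow_nonneg hγ0 t)

lemma rho_add_const (π : S → A → ℝ) (g : S → A → ℝ) (ν : S → ℝ) (c : ℝ)
    (hπ : ∀ s, IsPMF (π s)) :
    rho π (fun s a => g s a + c) ν = rho π g ν + c * ∑ s : S, ν s := by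
  have h : ∀ s a : _, ν s * π s a * (g s a + c)
      = ν s * π s a * g s a + c * (ν s * π s a) := fun s a => by ring
  simp only [rho, h, Finset.sum_add_distrib]
  congr 1
  rw [Finset.mul_sum]
  refine Finset.sum_congr rfl fun s _ => ?_
  rw [← Finset.mul_sum, ← Finset.mul_sum, (hπ s).2, mul_one]

lemma Vv_add_const (π : S → A → ℝ) (P : S → A → S → ℝ) (g : S → A → ℝ)
    (γ c : ℝ) (μ : S → ℝ) (Bg : ℝ)
    (hγ0 : 0 ≤ γ) (hγ1 : γ < 1)
    (hπ : ∀ s, IsPMF (π s)) (hP : ∀ s a, IsPMF (P s a)) (hμ : IsPMF μ)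
    (hg : ∀ s a, |g s a| ≤ Bg) (hBg : 0 ≤ Bg) :
    Vv π P (fun s a => g s a + c) γ μ = Vv π P g γ μ + c / (1 - γ) := by
  have h : ∀ t : ℕ, γ ^ t * rho π (fun s a => g s a + c) ((Tk π P)^[t] μ)
      = γ ^ t * rho π g ((Tk π P)^[t] μ) + c * γ ^ t := by
    intro t
    rw [rho_add_const π g _ c hπ, (Tk_iter_pmf π P μ t hπ hP hμ).2]
    ring
  rw [Vv, tsum_congr h,
    Summable.tsum_add (summable_V π P g γ μ Bg hγ0 hγ1 hπ hP hg hBg)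
      ((summable_geometric_of_lt_one hγ0 hγ1).mul_left c),
    tsum_mul_left, tsum_geometric_of_lt_one hγ0 hγ1, Vv, div_eq_mul_inv]

lemma tv_comm {X : Type*} [Fintype X] (p q : X → ℝ) : tv p q = tv q p := by
  simp [tv, abs_sub_comm]

end Helpers


/-- sub-optimality gap of the conservative policy: if `π̂`
maximizes the value in the conservative MDP `M̃` with reward
`r̃(s,a) = r(s,a) − (2γR_max/(1−γ))·Ĉ(s,a)` and transitions `P̂`, and
`TV(P̂(·|s,a),P*(·|s,a)) ≤ Ĉ(s,a) + ε`, then for every policy `π`,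
`V^{π̂}_{M*} ≥ V^π_{M*} − (4γR_max/(1−γ)²)·E_{d^π_{P̂}}[Ĉ] − (4γR_max/(1−γ)²)·ε`. -/
theorem stmt8 {S A : Type*} [Fintype S] [Fintype A] [DecidableEq S]
    (πhat : S → A → ℝ) (Pstar Phat : S → A → S → ℝ) (r : S → A → ℝ)
    (Chat : S → A → ℝ) (d₀ : S → ℝ) (γ Rmax ε : ℝ)
    (hπhat : ∀ s, IsPMF (πhat s)) (hPstar : ∀ s a, IsPMF (Pstar s a))
    (hPhat : ∀ s a, IsPMF (Phat s a)) (hd₀ : IsPMF d₀)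
    (hr : ∀ s a, |r s a| ≤ Rmax)
    (hChat0 : ∀ s a, 0 ≤ Chat s a) (hChat1 : ∀ s a, Chat s a ≤ 1)
    (hTV : ∀ s a, tv (Phat s a) (Pstar s a) ≤ Chat s a + ε)
    (hε : 0 ≤ ε) (hγ0 : 0 ≤ γ) (hγ1 : γ < 1)
    (hmax : ∀ π : S → A → ℝ, (∀ s, IsPMF (π s)) →
      expReturn π Phat
          (fun s a => r s a - (2 * γ * Rmax / (1 - γ)) * Chat s a) γ d₀ ≤
        expReturn πhat Phat
          (fun s a => r s a - (2 * γ * Rmax / (1 - γ)) * Chat s a) γ d₀) :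
    ∀ π : S → A → ℝ, (∀ s, IsPMF (π s)) →
      expReturn πhat Pstar r γ d₀ ≥
        expReturn π Pstar r γ d₀ -
          (4 * γ * Rmax / (1 - γ) ^ 2) *
            (∑ sa : S × A, visit π Phat d₀ γ sa * Chat sa.1 sa.2) -
          (4 * γ * Rmax / (1 - γ) ^ 2) * ε := by
  intro π hπ
  -- nonemptiness and basic positivity
  have hS : Nonempty S := by
    by_contra h
    rw [not_nonempty_iff] at h
    have h2 := hd₀.2
    rw [Finset.univ_eq_empty, Finset.sum_empty] at h2
    norm_num at h2
  obtain ⟨s0⟩ := hS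
  have hA : Nonempty A := by
    by_contra h
    rw [not_nonempty_iff] at h
    have h2 := (hπhat s0).2
    rw [Finset.univ_eq_empty, Finset.sum_empty] at h2
    norm_num at h2
  obtain ⟨a0⟩ := hA
  have hRmax : 0 ≤ Rmax := le_trans (abs_nonneg _) (hr s0 a0)
  have h1γ : (0:ℝ) < 1 - γ := by linarith
  set K : ℝ := 2 * γ * Rmax / (1 - γ) with hKdef
  have hK0 : 0 ≤ K := by positivity
  -- bounds for the conservative reward
  have hrt : ∀ s a, |r s a - K * Chat s a| ≤ Rmax + K := by
    intro s a
    calc |r s a - K * Chat s a| ≤ |r s a| + |K * Chat s a| := abs_sub _ _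
      _ ≤ Rmax + K := by
        refine add_le_add (hr s a) ?_
        rw [abs_mul, abs_of_nonneg hK0, abs_of_nonneg (hChat0 s a)]
        calc K * Chat s a ≤ K * 1 := mul_le_mul_of_nonneg_left (hChat1 s a) hK0
          _ = K := mul_one K
  have hChatB : ∀ s a, |Chat s a| ≤ 1 := fun s a => by
    rw [abs_of_nonneg (hChat0 s a)]; exact hChat1 s a
  have hCaddB : ∀ s a, |Chat s a + ε| ≤ 1 + ε := by
    intro s a
    rw [abs_of_nonneg (by linarith [hChat0 s a] : 0 ≤ Chat s a + ε)]
    linarith [hChat1 s a]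
  have htvB : ∀ s a, |tv (Pstar s a) (Phat s a)| ≤ 1 := fun s a => by
    rw [abs_of_nonneg (tv_nonneg _ _)]
    exact tv_le_one _ _ (hPstar s a) (hPhat s a)
  -- conversions to Vv
  have hconv : ∀ ρ : S → A → ℝ, (∀ s, IsPMF (ρ s)) →
      expReturn ρ Pstar r γ d₀ = Vv ρ Pstar r γ d₀ := fun ρ hρ =>
    expReturn_eq ρ Pstar r γ d₀ Rmax hγ0 hγ1 hρ hPstar hr hRmax
  have hconv2 : ∀ ρ : S → A → ℝ, (∀ s, IsPMF (ρ s)) →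
      expReturn ρ Phat (fun s a => r s a - K * Chat s a) γ d₀
        = Vv ρ Phat r γ d₀ - K * Vv ρ Phat Chat γ d₀ := by
    intro ρ hρ
    rw [expReturn_eq ρ Phat _ γ d₀ (Rmax + K) hγ0 hγ1 hρ hPhat hrt
      (by linarith)]
    exact Vv_sub_f ρ Phat r Chat K γ d₀ Rmax 1 hγ0 hγ1 hρ hPhat hr hRmax
      hChatB zero_le_one
  -- simulation bound for a policy ρ
  have hsim : ∀ ρ : S → A → ℝ, (∀ s, IsPMF (ρ s)) →
      |Vv ρ Pstar r γ d₀ - Vv ρ Phat r γ d₀| ≤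
        K * Vv ρ Phat Chat γ d₀ + K * (ε / (1 - γ)) := by
    intro ρ hρ
    have h1 := sim ρ Pstar Phat r γ Rmax d₀ hγ0 hγ1 hρ hPstar hPhat hr hRmax hd₀
    have hW : Vv ρ Phat (fun s a => tv (Pstar s a) (Phat s a)) γ d₀ ≤
        Vv ρ Phat Chat γ d₀ + ε / (1 - γ) := by
      have hmono := Vv_mono_f ρ Phat (fun s a => tv (Pstar s a) (Phat s a))
        (fun s a => Chat s a + ε) γ d₀ 1 (1 + ε) hγ0 hγ1 hρ hPhat hd₀
        htvB zero_le_one hCaddB (by linarith)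
        (fun s a => by
          show tv (Pstar s a) (Phat s a) ≤ Chat s a + ε
          rw [tv_comm]; exact hTV s a)
      rw [Vv_add_const ρ Phat Chat γ ε d₀ 1 hγ0 hγ1 hρ hPhat hd₀ hChatB
        zero_le_one] at hmono
      exact hmono
    have hKc : γ * (2 * (Rmax / (1 - γ))) = K := by
      rw [hKdef]; field_simp
    rw [hKc] at h1
    have hWnn : K * Vv ρ Phat (fun s a => tv (Pstar s a) (Phat s a)) γ d₀ ≤
        K * (Vv ρ Phat Chat γ d₀ + ε / (1 - γ)) :=
      mul_le_mul_of_nonneg_left hW hK0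
    calc |Vv ρ Pstar r γ d₀ - Vv ρ Phat r γ d₀|
        ≤ K * Vv ρ Phat (fun s a => tv (Pstar s a) (Phat s a)) γ d₀ := h1
      _ ≤ K * (Vv ρ Phat Chat γ d₀ + ε / (1 - γ)) := hWnn
      _ = K * Vv ρ Phat Chat γ d₀ + K * (ε / (1 - γ)) := mul_add K _ _
  -- instantiate
  have hsim_hat := hsim πhat hπhat
  have hsim_π := hsim π hπ
  have hmax' := hmax π hπ
  rw [hconv2 πhat hπhat, hconv2 π hπ] at hmax'
  rw [hconv πhat hπhat, hconv π hπ]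
  -- visitation identity
  have hvisit : ∑ sa : S × A, visit π Phat d₀ γ sa * Chat sa.1 sa.2
      = (1 - γ) * Vv π Phat Chat γ d₀ :=
    visit_eq π Phat d₀ γ Chat hγ0 hγ1 hπ hPhat hd₀ hChatB
  -- arithmetic identities
  have hA1 : (4 * γ * Rmax / (1 - γ) ^ 2) *
      (∑ sa : S × A, visit π Phat d₀ γ sa * Chat sa.1 sa.2)
      = K * Vv π Phat Chat γ d₀ + K * Vv π Phat Chat γ d₀ := by
    rw [hvisit, hKdef]
    field_simp
    ring
  have hA2 : (4 * γ * Rmax / (1 - γ) ^ 2) * ε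
      = K * (ε / (1 - γ)) + K * (ε / (1 - γ)) := by
    rw [hKdef]
    field_simp
    ring
  have hs1 := (abs_le.mp hsim_hat).1
  have hs2 := (abs_le.mp hsim_π).2
  rw [hA1, hA2]
  linarith
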